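/- arXiv:1511.03261 — 2 statements merged into one kernel-verified Lean document; each statement's English description precedes it below -/
import Mathlib

section
/- Let m be a positive integer, λ ∈ ℝ, and D, B : Fin m → ℝ. Assume that for all indices i, j with D i ≠ D j one has B i * B j + λ * (B i + B j) = D i + D j. Then the range of D has at most 3 elements, i.e., the finite set (Finset.univ.image D) has cardinality at most 3. -/
/-!
Summing the relations for the pairs `(1,2)` and `(3,4)` and subtracting those for `(1,3)` and
`(2,4)` cancels every `λ`- and `D`-term and leaves `(B₁ - B₄)(B₂ - B₃) = 0`. Either factor
vanishing makes two of the relations share their left-hand side, which forces two of the four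
`D`-values to coincide. So no four indices carry pairwise distinct values of `D`.
-/

open Finset

theorem Finset.exists_pairwise_ne_of_three_lt_card {α : Type*} [DecidableEq α] {s : Finset α}
    (hs : 3 < #s) :
    ∃ a ∈ s, ∃ b ∈ s, ∃ c ∈ s, ∃ d ∈ s,
      a ≠ b ∧ a ≠ c ∧ a ≠ d ∧ b ≠ c ∧ b ≠ d ∧ c ≠ d := by
  obtain ⟨a, ha⟩ := card_pos.mp (by omega : 0 < #s)
  have hs' : 2 < #(s.erase a) := by rw [card_erase_of_mem ha]; omega
  obtain ⟨b, hb, c, hc, d, hd, hbc, hbd, hcd⟩ := two_lt_card.mp hs'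
  exact ⟨a, ha, b, mem_of_mem_erase hb, c, mem_of_mem_erase hc, d, mem_of_mem_erase hd,
    (ne_of_mem_erase hb).symm, (ne_of_mem_erase hc).symm, (ne_of_mem_erase hd).symm,
    hbc, hbd, hcd⟩

theorem false_of_four_pairwise_ne {ι R : Type*} [CommRing R] [NoZeroDivisors R]
    {lam : R} {D B : ι → R}
    (h : ∀ i j, D i ≠ D j → B i * B j + lam * (B i + B j) = D i + D j)
    {i₁ i₂ i₃ i₄ : ι} (h₁₂ : D i₁ ≠ D i₂) (h₁₃ : D i₁ ≠ D i₃) (h₁₄ : D i₁ ≠ D i₄)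
    (h₂₃ : D i₂ ≠ D i₃) (h₂₄ : D i₂ ≠ D i₄) (h₃₄ : D i₃ ≠ D i₄) : False := by
  have e₁₂ := h i₁ i₂ h₁₂
  have e₁₃ := h i₁ i₃ h₁₃
  have e₂₄ := h i₂ i₄ h₂₄
  have e₃₄ := h i₃ i₄ h₃₄
  have key : (B i₁ - B i₄) * (B i₂ - B i₃) = 0 := by
    linear_combination e₁₂ + e₃₄ - e₁₃ - e₂₄
  rcases mul_eq_zero.mp key with hB | hB
  · have e₄₂ := h i₄ i₂ h₂₄.symm
    rw [sub_eq_zero.mp hB] at e₁₂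
    exact h₁₄ (add_right_cancel (e₁₂.symm.trans e₄₂))
  · rw [sub_eq_zero.mp hB] at e₁₂
    exact h₂₃ (add_left_cancel (e₁₂.symm.trans e₁₃))

theorem paraBlaschke_distinct_eigenvalues_le_three_general
    (m : ℕ) (lam : ℝ) (D B : Fin m → ℝ)
    (h : ∀ i j, D i ≠ D j → B i * B j + lam * (B i + B j) = D i + D j) :
    (Finset.univ.image D).card ≤ 3 := by
  by_contra! hcard
  obtain ⟨_, hx₁, _, hx₂, _, hx₃, _, hx₄, h₁₂, h₁₃, h₁₄, h₂₃, h₂₄, h₃₄⟩ :=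
    exists_pairwise_ne_of_three_lt_card hcard
  obtain ⟨i₁, -, rfl⟩ := mem_image.mp hx₁
  obtain ⟨i₂, -, rfl⟩ := mem_image.mp hx₂
  obtain ⟨i₃, -, rfl⟩ := mem_image.mp hx₃
  obtain ⟨i₄, -, rfl⟩ := mem_image.mp hx₄
  exact false_of_four_pairwise_ne h h₁₂ h₁₃ h₁₄ h₂₃ h₂₄ h₃₄

/-- Algebraic core of Corollary 4.5: if the eigenvalues `D i` of the para-Blaschke
tensor and the conformal principal curvatures `B i` satisfy
`B i * B j + λ * (B i + B j) = D i + D j` whenever `D i ≠ D j`, then `D` takes at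
most 3 distinct values. -/
theorem paraBlaschke_distinct_eigenvalues_le_three
    (m : ℕ) (hm : 0 < m) (lam : ℝ) (D B : Fin m → ℝ)
    (h : ∀ i j, D i ≠ D j → B i * B j + lam * (B i + B j) = D i + D j) :
    (Finset.univ.image D).card ≤ 3 :=
  paraBlaschke_distinct_eigenvalues_le_three_general m lam D B h
end

section
/- Let m be a positive integer, λ ∈ ℝ, and D, B : Fin m → ℝ. Assume that for all indices i, j with D i ≠ D j one has B i * B j + λ * (B i + B j) = D i + D j. If there exist indices i, j with D i = D j and B i ≠ B j, then for every index k with D k ≠ D i one has B k = −λ and D k = −λ² − D i; in particular the range of D is contained in {D i, −λ² − D i} and has at most 2 elements. -/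
/-!
Fix `i, j` with `D i = D j` and `B i ≠ B j`, and let `D k ≠ D i`. The relation for the pairs
`(i, k)` and `(j, k)` has the same right-hand side `D i + D k`; subtracting them gives
`(B i - B j) (B k + λ) = 0`, so `B k = -λ`. Substituting back, the left-hand side collapses to
`-λ²`, which forces `D k = -λ² - D i`.
-/

open Finset

/-- Equation (4.7) of the paper, relating eigenvalues `D` of the para-Blaschke tensor and
conformal principal curvatures `B`. -/
def ParaBlaschkeRelation {ι R : Type*} [CommRing R] (lam : R) (D B : ι → R) : Prop :=
  ∀ i j, D i ≠ D j → B i * B j + lam * (B i + B j) = D i + D j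

theorem eq_neg_of_mul_add_eq_of_mul_add_eq {R : Type*} [CommRing R] [NoZeroDivisors R]
    {a a' b lam d : R} (ha : a ≠ a') (h : a * b + lam * (a + b) = d)
    (h' : a' * b + lam * (a' + b) = d) : b = -lam := by
  have hprod : (a - a') * (b + lam) = 0 := by linear_combination h - h'
  rcases mul_eq_zero.mp hprod with hsub | hsum
  · exact absurd (sub_eq_zero.mp hsub) ha
  · exact eq_neg_of_add_eq_zero_left hsum

theorem Finset.card_image_le_two_of_forall_eq_or_eq {ι R : Type*} [Fintype ι] [DecidableEq R]
    {f : ι → R} {a b : R} (h : ∀ k, f k = a ∨ f k = b) : (univ.image f).card ≤ 2 := by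
  refine (card_le_card fun x hx => ?_).trans (card_le_two (a := a) (b := b))
  obtain ⟨k, -, rfl⟩ := mem_image.mp hx
  rcases h k with hk | hk <;> simp [hk]

namespace ParaBlaschkeRelation

variable {ι R : Type*} [CommRing R] {lam : R} {D B : ι → R}

theorem eq_of_eigenvalue_ne [NoZeroDivisors R] (hrel : ParaBlaschkeRelation lam D B)
    {i j k : ι} (hD : D i = D j) (hB : B i ≠ B j) (hk : D k ≠ D i) :
    B k = -lam ∧ D k = -lam ^ 2 - D i := by
  have hik := hrel i k (Ne.symm hk)
  have hjk := hrel j k (hD ▸ Ne.symm hk)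
  rw [← hD] at hjk
  have hBk : B k = -lam := eq_neg_of_mul_add_eq_of_mul_add_eq hB hik hjk
  refine ⟨hBk, ?_⟩
  rw [hBk] at hik
  linear_combination -hik

theorem eigenvalue_eq_or_eq [NoZeroDivisors R] (hrel : ParaBlaschkeRelation lam D B)
    {i j : ι} (hD : D i = D j) (hB : B i ≠ B j) (k : ι) :
    D k = D i ∨ D k = -lam ^ 2 - D i :=
  (em (D k = D i)).imp_right fun hk => (hrel.eq_of_eigenvalue_ne hD hB hk).2

end ParaBlaschkeRelation

theorem paraBlaschke_two_eigenvalues_general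
    (m : ℕ) (lam : ℝ) (D B : Fin m → ℝ)
    (h : ∀ i j, D i ≠ D j → B i * B j + lam * (B i + B j) = D i + D j)
    (i j : Fin m) (hD : D i = D j) (hB : B i ≠ B j) :
    (∀ k, D k ≠ D i → B k = -lam ∧ D k = -lam ^ 2 - D i)
      ∧ (∀ k, D k = D i ∨ D k = -lam ^ 2 - D i)
      ∧ (Finset.univ.image D).card ≤ 2 := by
  have hrel : ParaBlaschkeRelation lam D B := h
  have hrange := hrel.eigenvalue_eq_or_eq hD hB
  exact ⟨fun _ => hrel.eq_of_eigenvalue_ne hD hB, hrange,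
    card_image_le_two_of_forall_eq_or_eq hrange⟩

/-- Algebraic core of Lemma 4.4: if `B i * B j + λ * (B i + B j) = D i + D j`
whenever `D i ≠ D j`, and there are indices `i, j` with `D i = D j` but
`B i ≠ B j`, then every `k` with `D k ≠ D i` satisfies `B k = -λ` and
`D k = -λ² - D i`; in particular the range of `D` is contained in
`{D i, -λ² - D i}` and has at most 2 elements. -/
theorem paraBlaschke_two_eigenvalues
    (m : ℕ) (hm : 0 < m) (lam : ℝ) (D B : Fin m → ℝ)
    (h : ∀ i j, D i ≠ D j → B i * B j + lam * (B i + B j) = D i + D j)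
    (i j : Fin m) (hD : D i = D j) (hB : B i ≠ B j) :
    (∀ k, D k ≠ D i → B k = -lam ∧ D k = -lam ^ 2 - D i)
      ∧ (∀ k, D k = D i ∨ D k = -lam ^ 2 - D i)
      ∧ (Finset.univ.image D).card ≤ 2 :=
  paraBlaschke_two_eigenvalues_general m lam D B h i j hD hB
end
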